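/- For every s-step reasoning chain a, every permutation σ of {1,…,s}, every reasoning start x(2s+1) = (a m₀).1 with 1 ≤ m₀ ≤ s, and every layer l with 1 ≤ l and 2^(l−1) ≤ s, the information quantity at the final position satisfies C^l_(2s+1) = |V^l_(2s+1)| ≤ 3^(l−1). -/
import Mathlib


/-- An `s`-step reasoning chain, with pairs indexed by `1, …, s`:
entries of a pair differ, consecutive pairs link up, and there are no loops. -/
def IsChainOn (s : ℤ) (a : ℤ → ℤ × ℤ) : Prop :=
  (∀ i, 1 ≤ i → i ≤ s → (a i).1 ≠ (a i).2) ∧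
  (∀ i, 1 ≤ i → i ≤ s - 1 → (a i).2 = (a (i + 1)).1) ∧
  (∀ i j, 1 ≤ i → i ≤ j → j ≤ s → (a i).1 ≠ (a j).2)

/-- `x` is the `s`-step reasoning sequence built from the chain `a` and a
permutation `σ` of `{1, …, s}`. -/
def IsSeqOn (s : ℤ) (a : ℤ → ℤ × ℤ) (σ : ℤ → ℤ) (x : ℤ → ℤ) : Prop :=
  Set.BijOn σ (Set.Icc 1 s) (Set.Icc 1 s) ∧
  ∀ m : ℤ, 1 ≤ m → m ≤ s → x (2 * m - 1) = (a (σ m)).1 ∧ x (2 * m) = (a (σ m)).2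

/-- Value sets of maximal masked information propagation on the (finite, positions
`≥ 1`) sequence `x`: layer 0 is the token itself, layer 1 performs adjacent position
matching into even positions, and higher layers perform same-token matching from
all earlier positions `j` with `1 ≤ j < i`. -/
def valueSetM (x : ℤ → ℤ) : ℕ → ℤ → Set ℤ
  | 0, i => {x i}
  | 1, i => if Even i then {x (i - 1), x i} else {x i}
  | l + 2, i =>
      valueSetM x (l + 1) i ∪
        ⋃ (j : ℤ)
          (_ : 1 ≤ j ∧ j < i ∧ (valueSetM x (l + 1) j ∩ valueSetM x (l + 1) i).Nonempty),
          valueSetM x (l + 1) j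

namespace UBaux

/-- The chain values `v 0 = (a 1).1`, `v k = (a k).2` for `k ≥ 1`. -/
def cv (a : ℤ → ℤ × ℤ) : ℤ → ℤ := fun k => if k = 0 then (a 1).1 else (a k).2

lemma cv_ne {s : ℤ} {a : ℤ → ℤ × ℤ} (ha : IsChainOn s a) {p q : ℤ}
    (hp : 0 ≤ p) (hpq : p < q) (hq : q ≤ s) : cv a p ≠ cv a q := by
  obtain ⟨h1, h2, h3⟩ := ha
  unfold cv
  rcases eq_or_lt_of_le hp with h0 | h0
  · rw [if_pos h0.symm, if_neg (by omega)]
    exact h3 1 q le_rfl (by omega) hq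
  · rw [if_neg (by omega), if_neg (by omega)]
    have h' := h2 p (by omega) (by omega)
    rw [h']
    have hpq1 : p + 1 ≤ q := by omega
    exact h3 (p + 1) q (by omega) hpq1 hq

lemma cv_inj {s : ℤ} {a : ℤ → ℤ × ℤ} (ha : IsChainOn s a) {k k' : ℤ}
    (h1 : 0 ≤ k) (h2 : k ≤ s) (h3 : 0 ≤ k') (h4 : k' ≤ s)
    (h : cv a k = cv a k') : k = k' := by
  by_contra hne
  rcases lt_or_gt_of_ne hne with hlt | hgt
  · exact cv_ne ha h1 hlt h4 h
  · exact cv_ne ha h3 hgt h2 h.symm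

lemma a1_eq {s : ℤ} {a : ℤ → ℤ × ℤ} (ha : IsChainOn s a) {m : ℤ}
    (h1 : 1 ≤ m) (h2 : m ≤ s) : (a m).1 = cv a (m - 1) := by
  unfold cv
  rcases eq_or_lt_of_le h1 with h | h
  · rw [if_pos (by omega), ← h]
  · rw [if_neg (by omega)]
    have h' := ha.2.1 (m - 1) (by omega) (by omega)
    have hm : m - 1 + 1 = m := by ring
    rw [hm] at h'
    exact h'.symm

lemma a2_eq {a : ℤ → ℤ × ℤ} {m : ℤ} (h1 : 1 ≤ m) :
    (a m).2 = cv a m := by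
  unfold cv
  rw [if_neg (by omega)]

/-- Invariant: a value set is contained in the image under `cv a` of a subinterval of
`[0, s]` of diameter at most `d`. -/
def Inv (s : ℤ) (v : ℤ → ℤ) (V : Set ℤ) (d : ℤ) : Prop :=
  ∃ p q : ℤ, 0 ≤ p ∧ q ≤ s ∧ q - p ≤ d ∧ V ⊆ v '' Set.Icc p q

lemma Inv.mono {s : ℤ} {v : ℤ → ℤ} {V : Set ℤ} {d d' : ℤ} (h : Inv s v V d)
    (hd : d ≤ d') : Inv s v V d' := by
  obtain ⟨p, q, h1, h2, h3, h4⟩ := h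
  exact ⟨p, q, h1, h2, by omega, h4⟩

lemma step {s : ℤ} {v : ℤ → ℤ}
    (hinj : ∀ k k' : ℤ, 0 ≤ k → k ≤ s → 0 ≤ k' → k' ≤ s → v k = v k' → k = k')
    (x : ℤ → ℤ) (n : ℕ) (i : ℤ) (d D : ℤ) (hD : 0 ≤ D)
    (hi : Inv s v (valueSetM x (n + 1) i) d)
    (hall : ∀ j : ℤ, 1 ≤ j → j < i → Inv s v (valueSetM x (n + 1) j) D) :
    Inv s v (valueSetM x (n + 2) i) (d + 2 * D) := by
  obtain ⟨p, q, hp, hq, hd, hsub⟩ := hi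
  refine ⟨max 0 (p - D), min s (q + D), le_max_left _ _, min_le_left _ _, ?_, ?_⟩
  · have h1 : max 0 (p - D) ≥ p - D := le_max_right _ _
    have h2 : min s (q + D) ≤ q + D := min_le_right _ _
    omega
  · intro y hy
    have hy' : y ∈ valueSetM x (n + 1) i ∪
        ⋃ (j : ℤ)
          (_ : 1 ≤ j ∧ j < i ∧
            (valueSetM x (n + 1) j ∩ valueSetM x (n + 1) i).Nonempty),
          valueSetM x (n + 1) j := hy
    rcases hy' with hy1 | hy2
    · obtain ⟨k, hk, rfl⟩ := hsub hy1
      obtain ⟨hk1, hk2⟩ := hk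
      refine ⟨k, ⟨?_, ?_⟩, rfl⟩
      · exact max_le (by omega) (by omega)
      · exact le_min (by omega) (by omega)
    · simp only [Set.mem_iUnion] at hy2
      obtain ⟨j, ⟨hj1, hji, z, hz⟩, hyj⟩ := hy2
      obtain ⟨hzj, hzi⟩ := hz
      obtain ⟨pj, qj, hpj, hqj, hdj, hsubj⟩ := hall j hj1 hji
      obtain ⟨kz, ⟨hkz1, hkz2⟩, hez⟩ := hsubj hzj
      obtain ⟨kz', ⟨hkz1', hkz2'⟩, hez'⟩ := hsub hzi
      have hkk : kz = kz' :=
        hinj kz kz' (by omega) (by omega) (by omega) (by omega) (by rw [hez, hez'])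
      obtain ⟨k, ⟨hk1, hk2⟩, rfl⟩ := hsubj hyj
      refine ⟨k, ⟨?_, ?_⟩, rfl⟩
      · exact max_le (by omega) (by omega)
      · exact le_min (by omega) (by omega)

lemma layers {s : ℤ} (hs : 1 ≤ s) {a : ℤ → ℤ × ℤ} {σ x : ℤ → ℤ} {m₀ : ℤ}
    (ha : IsChainOn s a) (hx : IsSeqOn s a σ x)
    (hm₀ : 1 ≤ m₀ ∧ m₀ ≤ s) (hstart : x (2 * s + 1) = (a m₀).1) :
    ∀ n : ℕ,
      (∀ i : ℤ, 1 ≤ i → i ≤ 2 * s →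
        Inv s (cv a) (valueSetM x (n + 1) i) ((3 : ℤ) ^ n)) ∧
      Inv s (cv a) (valueSetM x (n + 1) (2 * s + 1)) ((3 : ℤ) ^ n - 1) := by
  have hσ : ∀ m : ℤ, 1 ≤ m → m ≤ s → 1 ≤ σ m ∧ σ m ≤ s := by
    intro m h1 h2
    have := hx.1.1 (show m ∈ Set.Icc 1 s from ⟨h1, h2⟩)
    exact ⟨this.1, this.2⟩
  have htok : ∀ m : ℤ, 1 ≤ m → m ≤ s →
      x (2 * m - 1) = cv a (σ m - 1) ∧ x (2 * m) = cv a (σ m) := by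
    intro m h1 h2
    obtain ⟨e1, e2⟩ := hx.2 m h1 h2
    obtain ⟨g1, g2⟩ := hσ m h1 h2
    exact ⟨by rw [e1, a1_eq ha g1 g2], by rw [e2, a2_eq g1]⟩
  intro n
  induction n with
  | zero =>
    constructor
    · intro i hi1 hi2
      rcases Int.even_or_odd i with ⟨m, hm⟩ | ⟨m, hm⟩
      · -- i = 2m, even
        have hm1 : 1 ≤ m := by omega
        have hm2 : m ≤ s := by omega
        obtain ⟨e1, e2⟩ := htok m hm1 hm2
        obtain ⟨g1, g2⟩ := hσ m hm1 hm2
        refine ⟨σ m - 1, σ m, by omega, g2, by omega, ?_⟩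
        have hieq : i = 2 * m := by omega
        have hev : Even i := ⟨m, hm⟩
        have : valueSetM x 1 i = {x (i - 1), x i} := by
          simp only [valueSetM, if_pos hev]
        rw [this, hieq]
        have hi1' : 2 * m - 1 = (2 * m) - 1 := rfl
        intro y hy
        rcases hy with hy | hy
        · rw [hy, e1]
          exact ⟨σ m - 1, ⟨le_refl _, by omega⟩, rfl⟩
        · rw [Set.mem_singleton_iff.mp hy, e2]
          exact ⟨σ m, ⟨by omega, le_refl _⟩, rfl⟩
      · -- i = 2m + 1, odd
        have hm1 : 1 ≤ m + 1 := by omega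
        have hm2 : m + 1 ≤ s := by omega
        obtain ⟨e1, _⟩ := htok (m + 1) hm1 hm2
        obtain ⟨g1, g2⟩ := hσ (m + 1) hm1 hm2
        have hod : ¬ Even i := by
          rw [hm]; intro ⟨r, hr⟩; omega
        have hset : valueSetM x 1 i = {x i} := by
          simp only [valueSetM, if_neg hod]
        refine ⟨σ (m + 1) - 1, σ (m + 1) - 1, by omega, by omega, by omega, ?_⟩
        rw [hset]
        intro y hy
        rw [Set.mem_singleton_iff.mp hy]
        have hieq : i = 2 * (m + 1) - 1 := by omega
        rw [hieq, e1]
        exact ⟨σ (m + 1) - 1, ⟨le_refl _, le_refl _⟩, rfl⟩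
    · -- position 2s+1
      have hod : ¬ Even (2 * s + 1) := by
        intro ⟨r, hr⟩; omega
      have hset : valueSetM x 1 (2 * s + 1) = {x (2 * s + 1)} := by
        simp only [valueSetM, if_neg hod]
      refine ⟨m₀ - 1, m₀ - 1, by omega, by omega, by omega, ?_⟩
      rw [hset]
      intro y hy
      rw [Set.mem_singleton_iff.mp hy, hstart, a1_eq ha hm₀.1 hm₀.2]
      exact ⟨m₀ - 1, ⟨le_refl _, le_refl _⟩, rfl⟩
  | succ n ih =>
    have hinj : ∀ k k' : ℤ, 0 ≤ k → k ≤ s → 0 ≤ k' → k' ≤ s →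
        cv a k = cv a k' → k = k' := fun k k' h1 h2 h3 h4 h =>
      cv_inj ha h1 h2 h3 h4 h
    have hD : (0 : ℤ) ≤ 3 ^ n := by positivity
    have h3n : (3 : ℤ) ^ (n + 1) = 3 ^ n + 2 * 3 ^ n := by ring
    have hall : ∀ j : ℤ, 1 ≤ j → j < 2 * s + 1 →
        Inv s (cv a) (valueSetM x (n + 1) j) ((3 : ℤ) ^ n) := by
      intro j h1 h2
      exact ih.1 j h1 (by omega)
    constructor
    · intro i hi1 hi2
      have := step hinj x n i ((3 : ℤ) ^ n) ((3 : ℤ) ^ n) hD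
        (ih.1 i hi1 hi2) (fun j h1 h2 => hall j h1 (by omega))
      exact this.mono (by omega)
    · have := step hinj x n (2 * s + 1) ((3 : ℤ) ^ n - 1) ((3 : ℤ) ^ n) hD
        ih.2 hall
      exact this.mono (by omega)

end UBaux

/-- upper bound `C^l_{2s+1} ≤ 3^(l-1)` at the reasoning-start position. -/
theorem upper_bound_at_start
    (s : ℤ) (hs : 1 ≤ s) (a : ℤ → ℤ × ℤ) (σ : ℤ → ℤ) (x : ℤ → ℤ) (m₀ : ℤ)
    (ha : IsChainOn s a) (hx : IsSeqOn s a σ x)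
    (hm₀ : 1 ≤ m₀ ∧ m₀ ≤ s) (hstart : x (2 * s + 1) = (a m₀).1)
    (l : ℕ) (hl : 1 ≤ l) (hls : (2 : ℤ) ^ (l - 1) ≤ s) :
    (valueSetM x l (2 * s + 1)).Finite ∧
      (valueSetM x l (2 * s + 1)).ncard ≤ 3 ^ (l - 1) := by
  obtain ⟨n, rfl⟩ : ∃ n, l = n + 1 := ⟨l - 1, by omega⟩
  have hn : n + 1 - 1 = n := by omega
  rw [hn] at *
  obtain ⟨p, q, hp, hq, hd, hsub⟩ := (UBaux.layers hs ha hx hm₀ hstart n).2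
  have hIccfin : (Set.Icc p q).Finite := Set.finite_Icc p q
  have hfin : (valueSetM x (n + 1) (2 * s + 1)).Finite :=
    (hIccfin.image _).subset hsub
  refine ⟨hfin, ?_⟩
  calc (valueSetM x (n + 1) (2 * s + 1)).ncard
      ≤ (UBaux.cv a '' Set.Icc p q).ncard :=
        Set.ncard_le_ncard hsub (hIccfin.image _)
    _ ≤ (Set.Icc p q).ncard := Set.ncard_image_le hIccfin
    _ ≤ 3 ^ n := by
        rw [show (Set.Icc p q : Set ℤ) = ↑(Finset.Icc p q) from (Finset.coe_Icc p q).symm,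
          Set.ncard_coe_finset, Int.card_Icc]
        have hc : ((3 ^ n : ℕ) : ℤ) = (3 : ℤ) ^ n := by push_cast; ring
        rw [Int.toNat_le]
        omega
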